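/- arXiv:2103.05998 — 3 statements merged into one kernel-verified Lean document; each statement's English description precedes it below -/
import Mathlib

section
/- For every positive integer k and every subset S of {1,...,2k} with |S| = k, letting T be the complement of S in {1,...,2k}, the set of all pairs (s,t) with s ∈ S and t ∈ T is an independent set of size k^2 in the shift graph G_k, and it is a maximum independent set (its size equals the independence number of G_k). -/
/-- A finset of vertices is independent: no two of its elements are adjacent. -/
def IsIndepF {V : Type*} (G : SimpleGraph V) (s : Finset V) : Prop :=
  ∀ a ∈ s, ∀ b ∈ s, ¬ G.Adj a b

/-- The independence number of a finite graph: the maximum size of an independent set. -/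
noncomputable def indepNum {V : Type*} [Fintype V] (G : SimpleGraph V) : ℕ :=
  sSup {n | ∃ s : Finset V, IsIndepF G s ∧ s.card = n}

/-- A maximum independent set: an independent set whose size is the independence number. -/
def IsMaxIndep {V : Type*} [Fintype V] (G : SimpleGraph V) (s : Finset V) : Prop :=
  IsIndepF G s ∧ s.card = indepNum G

/-- The vertex set of the shift graph: ordered pairs of distinct elements of `Fin (2k)`. -/
abbrev ShiftVert (k : ℕ) := {p : Fin (2 * k) × Fin (2 * k) // p.1 ≠ p.2}

/-- The shift graph `G_k`: two distinct vertices `(a,b)`, `(c,d)` are adjacent iff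
`b = c` or `d = a`. -/
def shiftGraph (k : ℕ) : SimpleGraph (ShiftVert k) where
  Adj x y := x ≠ y ∧ (x.1.2 = y.1.1 ∨ y.1.2 = x.1.1)
  symm := by
    constructor
    rintro x y ⟨hxy, h⟩
    exact ⟨hxy.symm, h.symm⟩
  loopless := by
    constructor
    rintro x ⟨hx, -⟩
    exact hx rfl

lemma shift_indep_card_le (k : ℕ) (I : Finset (ShiftVert k))
    (hI : IsIndepF (shiftGraph k) I) : I.card ≤ k ^ 2 := by
  classical
  set A := I.image (fun v : ShiftVert k => v.1.1) with hA
  set B := I.image (fun v : ShiftVert k => v.1.2) with hB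
  have hdisj : Disjoint A B := by
    rw [Finset.disjoint_left]
    rintro x hxA hxB
    obtain ⟨u, hu, hux⟩ := Finset.mem_image.1 hxA
    obtain ⟨w, hw, hwx⟩ := Finset.mem_image.1 hxB
    by_cases huw : u = w
    · subst huw; exact u.2 (hux.trans hwx.symm)
    · exact hI w hw u hu ⟨Ne.symm huw, Or.inl (hwx.trans hux.symm)⟩
  have hcard : I.card ≤ A.card * B.card := by
    rw [← Finset.card_product]
    apply Finset.card_le_card_of_injOn (fun v => (v.1.1, v.1.2))
    · intro v hv
      exact Finset.mem_product.2
        ⟨Finset.mem_image_of_mem _ hv, Finset.mem_image_of_mem _ hv⟩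
    · intro u _ w _ h
      exact Subtype.ext (Prod.ext (congrArg Prod.fst h) (congrArg Prod.snd h))
  have hsum : A.card + B.card ≤ 2 * k := by
    rw [← Finset.card_union_of_disjoint hdisj]
    calc (A ∪ B).card ≤ Finset.univ.card := Finset.card_le_card (Finset.subset_univ _)
      _ = 2 * k := by simp
  have hab : A.card * B.card ≤ k ^ 2 := by
    have h2 : (A.card : ℤ) + B.card ≤ 2 * k := by exact_mod_cast hsum
    have : (A.card : ℤ) * B.card ≤ (k : ℤ) ^ 2 := by
      nlinarith [sq_nonneg ((A.card : ℤ) - B.card)]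
    exact_mod_cast this
  exact hcard.trans hab

/-- For every subset `S` of `{1,…,2k}` of size `k`, with `T = Sᶜ`, the set of pairs
`(s,t)` with `s ∈ S`, `t ∈ T` is an independent set of size `k²` in `G_k`, and it is a
maximum independent set. -/
theorem shiftGraph_bipartition_isMaxIndep (k : ℕ) (hk : 0 < k)
    (S : Finset (Fin (2 * k))) (hS : S.card = k) :
    IsIndepF (shiftGraph k)
        (Finset.univ.filter fun v : ShiftVert k => v.1.1 ∈ S ∧ v.1.2 ∈ Sᶜ) ∧
      (Finset.univ.filter fun v : ShiftVert k => v.1.1 ∈ S ∧ v.1.2 ∈ Sᶜ).card = k ^ 2 ∧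
      (Finset.univ.filter fun v : ShiftVert k => v.1.1 ∈ S ∧ v.1.2 ∈ Sᶜ).card =
        indepNum (shiftGraph k) := by
  classical
  set F := Finset.univ.filter fun v : ShiftVert k => v.1.1 ∈ S ∧ v.1.2 ∈ Sᶜ with hF
  have hmemF : ∀ v : ShiftVert k, v ∈ F ↔ v.1.1 ∈ S ∧ v.1.2 ∈ Sᶜ := by
    intro v; simp [hF]
  have hindep : IsIndepF (shiftGraph k) F := by
    intro a ha b hb hadj
    obtain ⟨ha1, ha2⟩ := (hmemF a).1 ha
    obtain ⟨hb1, hb2⟩ := (hmemF b).1 hb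
    rcases hadj.2 with h | h
    · exact (Finset.mem_compl.1 ha2) (h ▸ hb1)
    · exact (Finset.mem_compl.1 hb2) (h ▸ ha1)
  have hcardF : F.card = k ^ 2 := by
    have hbij : F.card = (S ×ˢ Sᶜ).card := by
      apply Finset.card_bij (fun v _ => v.1)
      · intro v hv
        exact Finset.mem_product.2 ((hmemF v).1 hv)
      · intro u _ w _ h; exact Subtype.ext h
      · intro p hp
        obtain ⟨h1, h2⟩ := Finset.mem_product.1 hp
        have hne : p.1 ≠ p.2 := fun h => (Finset.mem_compl.1 h2) (h ▸ h1)
        exact ⟨⟨p, hne⟩, (hmemF _).2 ⟨h1, h2⟩, rfl⟩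
    have hcompl : (Sᶜ : Finset (Fin (2 * k))).card = k := by
      rw [Finset.card_compl, hS]
      simp [Fintype.card_fin]; omega
    rw [hbij, Finset.card_product, hS, hcompl, sq]
  refine ⟨hindep, hcardF, ?_⟩
  rw [hcardF, indepNum]
  have hmem : k ^ 2 ∈ {n | ∃ s : Finset (ShiftVert k), IsIndepF (shiftGraph k) s ∧ s.card = n} :=
    ⟨F, hindep, hcardF⟩
  have hub : ∀ n ∈ {n | ∃ s : Finset (ShiftVert k), IsIndepF (shiftGraph k) s ∧ s.card = n},
      n ≤ k ^ 2 := by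
    rintro n ⟨s, hs, rfl⟩
    exact shift_indep_card_le k s hs
  exact le_antisymm (le_csSup ⟨k ^ 2, hub⟩ hmem) (csSup_le ⟨k ^ 2, hmem⟩ hub)
end

section
/- For every positive integer k, every maximum independent set of the shift graph G_k is of the form {(s,t) : s ∈ S, t ∈ T} for some subset S of {1,...,2k} with |S| = k, where T is the complement of S in {1,...,2k}. -/
lemma indep_iff {k : ℕ} (s : Finset (ShiftVert k)) :
    IsIndepF (shiftGraph k) s ↔ ∀ u ∈ s, ∀ v ∈ s, u.1.2 ≠ v.1.1 := by
  constructor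
  · intro h u hu v hv heq
    by_cases huv : u = v
    · subst huv; exact u.2 heq.symm
    · exact h u hu v hv ⟨huv, Or.inl heq⟩
  · rintro h u hu v hv ⟨hne, h1 | h1⟩
    · exact h u hu v hv h1
    · exact h v hv u hu h1

lemma card_filter_pairs {k : ℕ} (S T : Finset (Fin (2*k))) (hST : Disjoint S T) :
    (Finset.univ.filter fun v : ShiftVert k => v.1.1 ∈ S ∧ v.1.2 ∈ T).card
      = S.card * T.card := by
  rw [← Finset.card_product]
  apply Finset.card_bij (fun v _ => v.1)
  · intro v hv
    simp only [Finset.mem_filter] at hv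
    simp [Finset.mem_product, hv.2.1, hv.2.2]
  · intro u _ v _ h'
    exact Subtype.ext h'
  · intro p hp
    simp only [Finset.mem_product] at hp
    have hne : p.1 ≠ p.2 := fun h => (Finset.disjoint_left.mp hST hp.1) (h ▸ hp.2)
    exact ⟨⟨p, hne⟩, by simp [hp.1, hp.2], rfl⟩

lemma filter_pairs_indep {k : ℕ} (S : Finset (Fin (2*k))) :
    IsIndepF (shiftGraph k)
      (Finset.univ.filter fun v : ShiftVert k => v.1.1 ∈ S ∧ v.1.2 ∈ Sᶜ) := by
  rw [indep_iff]
  intro u hu v hv heq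
  simp only [Finset.mem_filter, Finset.mem_compl] at hu hv
  exact hu.2.2 (heq ▸ hv.2.1)

lemma card_le_of_indep {k : ℕ} (s : Finset (ShiftVert k)) :
    s.card ≤ ((s.image fun v => v.1.1) ×ˢ (s.image fun v => v.1.2)).card := by
  apply Finset.card_le_card_of_injOn (fun v => (v.1.1, v.1.2))
  · intro v hv
    simp only [Finset.mem_coe, Finset.mem_product, Finset.mem_image]
    exact ⟨⟨v, hv, rfl⟩, ⟨v, hv, rfl⟩⟩
  · intro u _ v _ h'
    exact Subtype.ext (Prod.ext (congrArg Prod.fst h') (congrArg Prod.snd h'))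

lemma indep_disjoint {k : ℕ} (s : Finset (ShiftVert k))
    (h : IsIndepF (shiftGraph k) s) :
    Disjoint (s.image fun v => v.1.1) (s.image fun v => v.1.2) := by
  rw [Finset.disjoint_left]
  rintro x hx1 hx2
  simp only [Finset.mem_image] at hx1 hx2
  obtain ⟨v, hv, rfl⟩ := hx1
  obtain ⟨u, hu, he⟩ := hx2
  exact (indep_iff s).mp h u hu v hv he

lemma indep_card_le {k : ℕ} (s : Finset (ShiftVert k))
    (h : IsIndepF (shiftGraph k) s) : s.card ≤ k * k := by
  have h1 := card_le_of_indep s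
  rw [Finset.card_product] at h1
  set a := (s.image fun v => v.1.1).card
  set b := (s.image fun v => v.1.2).card
  have hab : a + b ≤ 2 * k := by
    rw [← Finset.card_union_of_disjoint (indep_disjoint s h)]
    calc _ ≤ Fintype.card (Fin (2 * k)) := Finset.card_le_univ _
    _ = 2 * k := by simp
  refine h1.trans ?_
  zify at hab ⊢
  nlinarith [sq_nonneg ((a : ℤ) - b)]

lemma indepNum_eq {k : ℕ} : indepNum (shiftGraph k) = k * k := by
  obtain ⟨S, -, hS⟩ := Finset.exists_subset_card_eq (s := (Finset.univ : Finset (Fin (2*k)))) (n := k)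
    (by simp [two_mul])
  have hSc : Sᶜ.card = k := by
    rw [Finset.card_compl, hS]
    simp [two_mul]
  have hmem : k * k ∈ {n | ∃ s : Finset (ShiftVert k), IsIndepF (shiftGraph k) s ∧ s.card = n} := by
    refine ⟨_, filter_pairs_indep S, ?_⟩
    rw [card_filter_pairs S Sᶜ (disjoint_compl_right), hS, hSc]
  apply le_antisymm
  · apply csSup_le ⟨_, hmem⟩
    rintro n ⟨t, ht, rfl⟩
    exact indep_card_le t ht
  · apply le_csSup _ hmem
    refine ⟨k * k, ?_⟩
    rintro n ⟨t, ht, rfl⟩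
    exact indep_card_le t ht


/-- Every maximum independent set of the shift graph `G_k` is the set of pairs `(s,t)`,
`s ∈ S`, `t ∈ Sᶜ`, for some subset `S` of `{1,…,2k}` with `|S| = k`. -/
theorem shiftGraph_maxIndep_structure (k : ℕ) (hk : 0 < k)
    (s : Finset (ShiftVert k)) (hs : IsMaxIndep (shiftGraph k) s) :
    ∃ S : Finset (Fin (2 * k)), S.card = k ∧
      s = Finset.univ.filter fun v : ShiftVert k => v.1.1 ∈ S ∧ v.1.2 ∈ Sᶜ := by
  obtain ⟨hind, hcard⟩ := hs
  rw [indepNum_eq] at hcard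
  set A := s.image fun v => v.1.1 with hA
  set B := s.image fun v => v.1.2 with hB
  have hdisj := indep_disjoint s hind
  have h1 := card_le_of_indep s
  rw [Finset.card_product] at h1
  have hab : A.card + B.card ≤ 2 * k := by
    rw [← Finset.card_union_of_disjoint hdisj]
    calc _ ≤ Fintype.card (Fin (2 * k)) := Finset.card_le_univ _
    _ = 2 * k := by simp
  rw [hcard] at h1
  have hAk : A.card = k := by
    zify at hab h1 ⊢
    nlinarith [sq_nonneg ((A.card : ℤ) - B.card), sq_nonneg ((A.card : ℤ) - k)]
  have hBk : B.card = k := by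
    zify at hab h1 ⊢
    nlinarith [sq_nonneg ((A.card : ℤ) - B.card), sq_nonneg ((B.card : ℤ) - k)]
  have hBAc : B = Aᶜ := by
    apply Finset.eq_of_subset_of_card_le
    · intro x hx
      rw [Finset.mem_compl]
      exact fun hxA => Finset.disjoint_left.mp hdisj hxA hx
    · rw [Finset.card_compl, hAk, hBk, Fintype.card_fin]
      omega
  refine ⟨A, hAk, ?_⟩
  refine Finset.eq_of_subset_of_card_le ?_ ?_
  · intro v hv
    simp only [Finset.mem_filter, Finset.mem_univ, true_and]
    rw [← hBAc]
    exact ⟨Finset.mem_image_of_mem _ hv, Finset.mem_image_of_mem _ hv⟩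
  · have h2 : Aᶜ.card = k := by
      rw [Finset.card_compl, hAk, Fintype.card_fin]; omega
    rw [card_filter_pairs A Aᶜ disjoint_compl_right, hcard, hAk, h2]
end

section
/- For every positive integer k, there exists a set of k+1 vertices of the shift graph G_k that intersects every maximum independent set of G_k; one such set is given by a directed cycle of length k+1, namely the set of pairs {(a_1,a_2), (a_2,a_3), ..., (a_k,a_{k+1}), (a_{k+1},a_1)} for any k+1 distinct elements a_1,...,a_{k+1} of {1,...,2k}. -/
section Aux
variable {k : ℕ}

/-- heads/tails are disjoint for an independent set -/
lemma tails_heads_disjoint (s : Finset (ShiftVert k)) (hs : IsIndepF (shiftGraph k) s) :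
    Disjoint (s.image fun v => v.1.1) (s.image fun v => v.1.2) := by
  rw [Finset.disjoint_left]
  rintro x hx hy
  simp only [Finset.mem_image] at hx hy
  obtain ⟨u, hu, hux⟩ := hx
  obtain ⟨w, hw, hwx⟩ := hy
  refine hs w hw u hu ⟨?_, Or.inl (hwx.trans hux.symm)⟩
  rintro rfl
  exact w.2 (hux.trans hwx.symm)

lemma indep_card_le_s4 (s : Finset (ShiftVert k)) (hs : IsIndepF (shiftGraph k) s) :
    s.card ≤ ((s.image fun v => v.1.1) ×ˢ (s.image fun v => v.1.2)).card := by
  apply Finset.card_le_card_of_injOn (fun v => v.1)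
  · intro v hv
    simp only [Finset.mem_coe, Finset.mem_product, Finset.mem_image]
    exact ⟨⟨v, hv, rfl⟩, ⟨v, hv, rfl⟩⟩
  · intro v _ w _ h
    exact Subtype.ext h

lemma sum_le_2k (T H : Finset (Fin (2 * k))) (hd : Disjoint T H) :
    T.card + H.card ≤ 2 * k := by
  have := Finset.card_le_univ (T ∪ H)
  rw [Finset.card_union_of_disjoint hd] at this
  simpa using this


lemma int_eq_of_sq_le (a : ℤ) (h : (a - (k:ℤ)) ^ 2 ≤ 0) : a = k := by
  have h0 := sq_nonneg (a - (k:ℤ))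
  have : (a - (k:ℤ)) ^ 2 = 0 := le_antisymm h h0
  have := pow_eq_zero_iff (n := 2) (by norm_num) |>.mp this
  linarith [sub_eq_zero.mp this]

lemma exists_TH (s : Finset (ShiftVert k)) (hs : IsIndepF (shiftGraph k) s)
    (hcard : k * k ≤ s.card) :
    ∃ T H : Finset (Fin (2 * k)), T.card = k ∧ H.card = k ∧ Disjoint T H ∧
      ∀ x ∈ T, ∀ y ∈ H, ∃ v ∈ s, v.1.1 = x ∧ v.1.2 = y := by
  set T := s.image fun v => v.1.1 with hTdef
  set H := s.image fun v => v.1.2 with hHdef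
  have hd := tails_heads_disjoint s hs
  have h1 := indep_card_le_s4 s hs
  have h2 := sum_le_2k T H hd
  rw [Finset.card_product] at h1
  have h1' : (k : ℤ) * k ≤ (T.card : ℤ) * H.card := by exact_mod_cast le_trans hcard h1
  have h2' : (T.card : ℤ) + H.card ≤ 2 * k := by exact_mod_cast h2
  have hTk : ((T.card : ℤ) - k) ^ 2 ≤ 0 := by nlinarith [Int.ofNat_nonneg T.card, Int.ofNat_nonneg H.card]
  have hHk : ((H.card : ℤ) - k) ^ 2 ≤ 0 := by nlinarith [Int.ofNat_nonneg T.card, Int.ofNat_nonneg H.card]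
  have hT : T.card = k := by exact_mod_cast int_eq_of_sq_le (k := k) _ hTk
  have hH : H.card = k := by exact_mod_cast int_eq_of_sq_le (k := k) _ hHk
  refine ⟨T, H, hT, hH, hd, ?_⟩
  -- fullness
  have hinj : Set.InjOn (fun v : ShiftVert k => v.1) s := fun v _ w _ h => Subtype.ext h
  have himg : s.image (fun v => v.1) ⊆ T ×ˢ H := by
    intro p hp
    simp only [Finset.mem_image] at hp
    obtain ⟨v, hv, rfl⟩ := hp
    simp only [Finset.mem_product, hTdef, hHdef, Finset.mem_image]
    exact ⟨⟨v, hv, rfl⟩, ⟨v, hv, rfl⟩⟩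
  have hcardimg : (T ×ˢ H).card ≤ (s.image (fun v => v.1)).card := by
    rw [Finset.card_image_of_injOn hinj, Finset.card_product, hT, hH]
    omega
  have heq := Finset.eq_of_subset_of_card_le himg hcardimg
  intro x hx y hy
  have : (x, y) ∈ s.image (fun v => v.1) := by
    rw [heq]; exact Finset.mem_product.mpr ⟨hx, hy⟩
  simp only [Finset.mem_image] at this
  obtain ⟨v, hv, hveq⟩ := this
  exact ⟨v, hv, congrArg Prod.fst hveq, congrArg Prod.snd hveq⟩

lemma succ_ne (hk : 0 < k) (i : Fin (k + 1)) : i ≠ i + 1 := by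
  intro h
  have h1 : (1 : Fin (k + 1)) = 0 := left_eq_add.mp h
  have h2 : (1 : Fin (k + 1)).val = 0 := by rw [h1]; rfl
  rw [Fin.val_one'] at h2
  have := Nat.mod_eq_of_lt (show 1 < k + 1 by omega)
  omega

lemma cycle_filter_card (hk : 0 < k) (a : Fin (k + 1) → Fin (2 * k))
    (ha : Function.Injective a) :
    (Finset.univ.filter fun v : ShiftVert k =>
        ∃ i : Fin (k + 1), v.1.1 = a i ∧ v.1.2 = a (i + 1)).card = k + 1 := by
  set f : Fin (k + 1) → ShiftVert k := fun i => ⟨(a i, a (i + 1)), ha.ne (succ_ne hk i)⟩ with hf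
  have hfeq : (Finset.univ.filter fun v : ShiftVert k =>
      ∃ i : Fin (k + 1), v.1.1 = a i ∧ v.1.2 = a (i + 1)) = Finset.univ.image f := by
    ext v
    simp only [Finset.mem_filter, Finset.mem_univ, true_and, Finset.mem_image]
    constructor
    · rintro ⟨i, h1, h2⟩
      exact ⟨i, Subtype.ext (Prod.ext h1.symm h2.symm)⟩
    · rintro ⟨i, rfl⟩
      exact ⟨i, rfl, rfl⟩
  rw [hfeq, Finset.card_image_of_injective _ (fun i j h => ha (congrArg (fun v : ShiftVert k => v.1.1) h)),
    Finset.card_univ, Fintype.card_fin]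

open Fin.NatCast in
lemma cycle_hits (hk : 0 < k) (a : Fin (k + 1) → Fin (2 * k)) (ha : Function.Injective a)
    (T H : Finset (Fin (2 * k))) (hT : T.card = k) (hH : H.card = k) (hd : Disjoint T H) :
    ∃ i : Fin (k + 1), a i ∈ T ∧ a (i + 1) ∈ H := by
  have huniv : T ∪ H = Finset.univ := by
    apply Finset.eq_univ_of_card
    rw [Finset.card_union_of_disjoint hd, hT, hH]
    simp [two_mul]
  have hTH : ∀ x : Fin (2 * k), x ∈ T ∨ x ∈ H := by
    intro x
    have : x ∈ T ∪ H := huniv ▸ Finset.mem_univ x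
    exact Finset.mem_union.mp this
  by_contra hcon
  push_neg at hcon
  -- image of a has card k+1
  have himg : (Finset.univ.image a).card = k + 1 := by
    rw [Finset.card_image_of_injective _ ha, Finset.card_univ, Fintype.card_fin]
  -- there is some j with a j ∈ T
  have hj : ∃ j : Fin (k + 1), a j ∈ T := by
    by_contra hc
    push_neg at hc
    have : Finset.univ.image a ⊆ H := by
      intro x hx
      simp only [Finset.mem_image] at hx
      obtain ⟨i, _, rfl⟩ := hx
      exact (hTH (a i)).resolve_left (hc i)
    have := Finset.card_le_card this
    omega
  obtain ⟨j, hjT⟩ := hj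
  -- all a i ∈ T by induction around the cycle
  have hall : ∀ n : ℕ, a (j + (n : Fin (k + 1))) ∈ T := by
    intro n
    induction n with
    | zero => simpa using hjT
    | succ n ih =>
      have step := hcon (j + (n : Fin (k + 1)))
      have : a (j + (n : Fin (k + 1)) + 1) ∉ H := fun hmem => step ih hmem
      have hmemT : a (j + (n : Fin (k + 1)) + 1) ∈ T :=
        (hTH _).resolve_right this
      have : ((n + 1 : ℕ) : Fin (k + 1)) = (n : Fin (k + 1)) + 1 := by push_cast; ring
      rw [this, ← add_assoc]
      exact hmemT
  have : Finset.univ.image a ⊆ T := by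
    intro x hx
    simp only [Finset.mem_image] at hx
    obtain ⟨i, _, rfl⟩ := hx
    have h2 := Fin.cast_val_eq_self (i - j)
    have h1 : j + (i - j) = i := by abel
    have := hall (i - j).val
    rw [h2, h1] at this
    exact this
  have := Finset.card_le_card this
  omega

lemma indep_lower (hk : 0 < k) :
    ∃ s : Finset (ShiftVert k), IsIndepF (shiftGraph k) s ∧ k * k ≤ s.card := by
  refine ⟨Finset.univ.filter fun v : ShiftVert k => v.1.1.val < k ∧ k ≤ v.1.2.val, ?_, ?_⟩
  · intro v hv w hw hadj
    simp only [Finset.mem_filter] at hv hw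
    obtain ⟨-, hadj⟩ := hadj
    rcases hadj with h | h
    · have := congrArg Fin.val h
      omega
    · have := congrArg Fin.val h
      omega
  · have := Finset.card_le_card_of_injOn
      (f := fun p : Fin k × Fin k =>
        (⟨(⟨p.1.val, by have := p.1.isLt; omega⟩, ⟨k + p.2.val, by have := p.2.isLt; omega⟩),
          by simp only [ne_eq, Prod.mk.injEq, Fin.mk.injEq]; omega⟩ : ShiftVert k))
      (s := (Finset.univ : Finset (Fin k × Fin k)))
      (t := Finset.univ.filter fun v : ShiftVert k => v.1.1.val < k ∧ k ≤ v.1.2.val)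
      (by
        intro p _
        simp only [Finset.mem_coe, Finset.mem_filter, Finset.mem_univ, true_and]
        exact ⟨p.1.isLt, Nat.le_add_right k p.2.val⟩)
      (by
        intro p _ q _ h
        simp only [Subtype.mk.injEq, Prod.mk.injEq, Fin.mk.injEq] at h
        ext <;> omega)
    simpa using this

lemma maxindep_card_ge (hk : 0 < k) (s : Finset (ShiftVert k))
    (h : IsMaxIndep (shiftGraph k) s) : k * k ≤ s.card := by
  obtain ⟨s₀, hs₀, hc₀⟩ := indep_lower hk
  have hmem : s₀.card ∈ {n | ∃ t : Finset (ShiftVert k), IsIndepF (shiftGraph k) t ∧ t.card = n} :=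
    ⟨s₀, hs₀, rfl⟩
  have hbdd : BddAbove {n | ∃ t : Finset (ShiftVert k), IsIndepF (shiftGraph k) t ∧ t.card = n} := by
    refine ⟨Fintype.card (ShiftVert k), ?_⟩
    rintro n ⟨t, -, rfl⟩
    exact Finset.card_le_univ t
  have := le_csSup hbdd hmem
  rw [h.2, indepNum]
  omega

theorem shiftGraph_hitting_set' (hk : 0 < k) :
    (∃ H : Finset (ShiftVert k), H.card = k + 1 ∧
        ∀ s : Finset (ShiftVert k), IsMaxIndep (shiftGraph k) s → ∃ x ∈ s, x ∈ H) ∧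
      ∀ a : Fin (k + 1) → Fin (2 * k), Function.Injective a →
        (Finset.univ.filter fun v : ShiftVert k =>
            ∃ i : Fin (k + 1), v.1.1 = a i ∧ v.1.2 = a (i + 1)).card = k + 1 ∧
          ∀ s : Finset (ShiftVert k), IsMaxIndep (shiftGraph k) s →
            ∃ x ∈ s, x ∈ Finset.univ.filter fun v : ShiftVert k =>
              ∃ i : Fin (k + 1), v.1.1 = a i ∧ v.1.2 = a (i + 1) := by
  have main : ∀ a : Fin (k + 1) → Fin (2 * k), Function.Injective a →
      (Finset.univ.filter fun v : ShiftVert k =>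
          ∃ i : Fin (k + 1), v.1.1 = a i ∧ v.1.2 = a (i + 1)).card = k + 1 ∧
        ∀ s : Finset (ShiftVert k), IsMaxIndep (shiftGraph k) s →
          ∃ x ∈ s, x ∈ Finset.univ.filter fun v : ShiftVert k =>
            ∃ i : Fin (k + 1), v.1.1 = a i ∧ v.1.2 = a (i + 1) := by
    intro a ha
    refine ⟨cycle_filter_card hk a ha, ?_⟩
    intro s hs
    obtain ⟨T, H, hT, hH, hd, hfull⟩ := exists_TH s hs.1 (maxindep_card_ge hk s hs)
    obtain ⟨i, hiT, hiH⟩ := cycle_hits hk a ha T H hT hH hd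
    obtain ⟨v, hv, hv1, hv2⟩ := hfull _ hiT _ hiH
    exact ⟨v, hv, Finset.mem_filter.mpr ⟨Finset.mem_univ v, i, hv1, hv2⟩⟩
  refine ⟨?_, main⟩
  have ha : Function.Injective (fun i : Fin (k + 1) => (⟨i.val, by have := i.isLt; omega⟩ : Fin (2 * k))) := by
    intro i j h
    simp only [Fin.mk.injEq] at h
    exact Fin.ext h
  obtain ⟨hc, hhit⟩ := main _ ha
  exact ⟨_, hc, hhit⟩

end Aux

/-- There is a set of `k+1` vertices of `G_k` meeting every maximum independent set;
one such set is the directed cycle `(a₁,a₂),(a₂,a₃),…,(a_{k+1},a₁)` on any `k+1`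
distinct elements `a₁,…,a_{k+1}` of `{1,…,2k}`. -/
theorem shiftGraph_hitting_set (k : ℕ) (hk : 0 < k) :
    (∃ H : Finset (ShiftVert k), H.card = k + 1 ∧
        ∀ s : Finset (ShiftVert k), IsMaxIndep (shiftGraph k) s → ∃ x ∈ s, x ∈ H) ∧
      ∀ a : Fin (k + 1) → Fin (2 * k), Function.Injective a →
        (Finset.univ.filter fun v : ShiftVert k =>
            ∃ i : Fin (k + 1), v.1.1 = a i ∧ v.1.2 = a (i + 1)).card = k + 1 ∧
          ∀ s : Finset (ShiftVert k), IsMaxIndep (shiftGraph k) s →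
            ∃ x ∈ s, x ∈ Finset.univ.filter fun v : ShiftVert k =>
              ∃ i : Fin (k + 1), v.1.1 = a i ∧ v.1.2 = a (i + 1) :=
  shiftGraph_hitting_set' hk
end
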